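/- arXiv:2111.00938 — 5 statements merged into one kernel-verified Lean document; each statement's English description precedes it below -/
import Mathlib

section
/- For an n×n symmetric matrix A, ∑_{i,j} (∂E_k/∂A_{ij}) (A²)_{ij} = n·E_1(A)·E_k(A) − (n−k)·E_{k+1}(A), where (A²)_{ij} = ∑_m A_{im} A_{mj}. -/
/-- `E_k(A) = (n choose k)⁻¹ σ_k(κ(A))`, where `σ_k` of the eigenvalues is read off
from the characteristic polynomial of the matrix `A`; note `E_k = 0` for `k > n`. -/
noncomputable def EMat (n k : ℕ) (A : Fin n → Fin n → ℝ) : ℝ :=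
  ((n.choose k : ℝ))⁻¹ * ((-1 : ℝ) ^ k * (Matrix.of A).charpoly.coeff (n - k))

/-- `Ė_k^{ij} = ∂E_k/∂A_{ij}`. -/
noncomputable def EMatDot (n k : ℕ) (A : Fin n → Fin n → ℝ) (i j : Fin n) : ℝ :=
  fderiv ℝ (EMat n k) A (Pi.single i (Pi.single j 1))

/-!
For symmetric `A` with eigenvalues `μ`, the matrix `A + s A²` has eigenvalues `μᵢ + s μᵢ²`, and
`E_k` is a polynomial in the entries (through the universal characteristic polynomial), hence
differentiable. So the left-hand side, the derivative of `E_k` along `s ↦ A + s A²` at `s = 0`,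
equals `(n choose k)⁻¹ ∑ᵢ μᵢ² ∂σ_k/∂μᵢ`. Splitting `σ₁ σ_k = ∑ᵢ μᵢ σ_k` according to whether `i`
lies in the chosen `k`-subset gives `∑ᵢ μᵢ² ∂σ_k/∂μᵢ = σ₁ σ_k - (k + 1) σ_{k+1}`, and
`(k + 1) (n choose k+1) = (n - k) (n choose k)` turns this into the stated identity.
-/

open Polynomial Finset

section ElemSymm

variable {ι R : Type*} [Fintype ι]

noncomputable def elemSymm [CommSemiring R] (μ : ι → R) (k : ℕ) : R :=
  ∑ t ∈ powersetCard k univ, ∏ i ∈ t, μ i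

section CommSemiring

variable [CommSemiring R]

theorem elemSymm_one (μ : ι → R) : elemSymm μ 1 = ∑ i, μ i := by
  simp [elemSymm, powersetCard_one]

theorem elemSymm_eq_zero_of_card_lt (μ : ι → R) {k : ℕ} (hk : Fintype.card ι < k) :
    elemSymm μ k = 0 := by
  rw [elemSymm, powersetCard_eq_empty.mpr (by rwa [card_univ]), sum_empty]

theorem sum_sum_prod_insert [DecidableEq ι] (μ : ι → R) (k : ℕ) :
    ∑ S ∈ powersetCard k univ, ∑ i ∈ univ \ S, ∏ j ∈ insert i S, μ j
      = (k + 1) * elemSymm μ (k + 1) := by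
  have hcount : (k + 1) * elemSymm μ (k + 1)
      = ∑ T ∈ powersetCard (k + 1) univ, ∑ _i ∈ T, ∏ j ∈ T, μ j := by
    rw [elemSymm, mul_sum]
    refine sum_congr rfl fun T hT => ?_
    rw [sum_const, mem_powersetCard_univ.mp hT, nsmul_eq_mul]
    push_cast; ring
  rw [hcount, sum_sigma', sum_sigma']
  refine sum_nbij' (fun p => ⟨insert p.2 p.1, p.2⟩) (fun q => ⟨q.1.erase q.2, q.2⟩)
    ?_ ?_ ?_ ?_ (fun _ _ => rfl)
  · rintro ⟨S, i⟩ hp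
    simp only [mem_sigma, mem_powersetCard_univ, mem_sdiff, mem_univ, true_and] at hp ⊢
    exact ⟨by rw [card_insert_of_notMem hp.2, hp.1], mem_insert_self _ _⟩
  · rintro ⟨T, i⟩ hq
    simp only [mem_sigma, mem_powersetCard_univ, mem_sdiff, mem_univ, true_and] at hq ⊢
    exact ⟨by rw [card_erase_of_mem hq.2, hq.1, Nat.add_sub_cancel], notMem_erase _ _⟩
  · rintro ⟨S, i⟩ hp
    simp only [mem_sigma, mem_sdiff] at hp
    simp [erase_insert hp.2.2]
  · rintro ⟨T, i⟩ hq
    simp only [mem_sigma] at hq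
    simp [insert_erase hq.2]

end CommSemiring

variable [CommRing R]

theorem coeff_prod_X_sub_C_card_sub (μ : ι → R) {k : ℕ} (hk : k ≤ Fintype.card ι) :
    (∏ i, (X - C (μ i))).coeff (Fintype.card ι - k) = (-1) ^ k * elemSymm μ k := by
  have hcard : Multiset.card (univ.val.map μ) = Fintype.card ι := by simp
  have hprod : ∏ i, (X - C (μ i)) = ((univ.val.map μ).map fun t => X - C t).prod := by
    rw [Multiset.map_map]; rfl
  rw [hprod, Multiset.prod_X_sub_C_coeff _ (hcard ▸ Nat.sub_le _ _), hcard, Nat.sub_sub_self hk,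
    esymm_map_val, elemSymm]

theorem sum_sum_prod_erase_mul_sq [DecidableEq ι] (μ : ι → R) (k : ℕ) :
    ∑ S ∈ powersetCard k univ, ∑ i ∈ S, (∏ j ∈ S.erase i, μ j) * μ i ^ 2
      = elemSymm μ 1 * elemSymm μ k - (k + 1) * elemSymm μ (k + 1) := by
  have hsplit : ∀ S : Finset ι, ∑ i, μ i * ∏ j ∈ S, μ j
      = ∑ i ∈ S, (∏ j ∈ S.erase i, μ j) * μ i ^ 2 + ∑ i ∈ univ \ S, ∏ j ∈ insert i S, μ j := by
    intro S
    rw [← sum_sdiff (subset_univ S), add_comm]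
    congr 1
    · refine sum_congr rfl fun i hi => ?_
      rw [← mul_prod_erase S μ hi]
      ring
    · exact sum_congr rfl fun i hi => (prod_insert (mem_sdiff.mp hi).2).symm
  rw [elemSymm_one, elemSymm, sum_mul_sum, sum_comm, ← sum_sum_prod_insert, ← sum_sub_distrib]
  exact sum_congr rfl fun S _ => by rw [hsplit]; ring

end ElemSymm

theorem HasDerivAt.elemSymm {ι 𝕜 : Type*} [Fintype ι] [DecidableEq ι] [NontriviallyNormedField 𝕜]
    {f : ι → 𝕜 → 𝕜} {f' : ι → 𝕜} {x : 𝕜} (hf : ∀ i, HasDerivAt (f i) (f' i) x) (k : ℕ) :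
    HasDerivAt (fun s => elemSymm (f · s) k)
      (∑ S ∈ powersetCard k univ, ∑ i ∈ S, (∏ j ∈ S.erase i, f j x) * f' i) x :=
  HasDerivAt.fun_sum fun _ _ => HasDerivAt.fun_finsetProd fun i _ => hf i

theorem MvPolynomial.differentiable_eval {E σ 𝕜 : Type*} [NontriviallyNormedField 𝕜]
    [NormedAddCommGroup E] [NormedSpace 𝕜 E] {f : E → σ → 𝕜}
    (hf : ∀ i, Differentiable 𝕜 (f · i)) (p : MvPolynomial σ 𝕜) :
    Differentiable 𝕜 fun x => MvPolynomial.eval (f x) p := by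
  induction p using MvPolynomial.induction_on with
  | C a => simp
  | add p q hp hq => simp only [map_add]; exact hp.add hq
  | mul_X p i hp => simp only [map_mul, MvPolynomial.eval_X]; exact hp.mul (hf i)

theorem Matrix.differentiable_charpoly_coeff {ι 𝕜 : Type*} [Fintype ι] [DecidableEq ι]
    [NontriviallyNormedField 𝕜] (m : ℕ) :
    Differentiable 𝕜 fun A : ι → ι → 𝕜 => (Matrix.of A).charpoly.coeff m := by
  have h := MvPolynomial.differentiable_eval (f := fun (A : ι → ι → 𝕜) (ij : ι × ι) => A ij.1 ij.2)
    (fun ij => by fun_prop)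
    ((Matrix.charpoly.univ 𝕜 ι).coeff m)
  have heq : (fun A : ι → ι → 𝕜 => (Matrix.of A).charpoly.coeff m)
      = fun A => MvPolynomial.eval (fun ij => A ij.1 ij.2) ((Matrix.charpoly.univ 𝕜 ι).coeff m) :=
    funext fun A => by rw [MvPolynomial.eval, Matrix.charpoly.univ_coeff_eval₂Hom]; rfl
  rwa [heq]

theorem Matrix.IsHermitian.charpoly_add_smul_sq {ι : Type*} [Fintype ι] [DecidableEq ι]
    {A : Matrix ι ι ℝ} (hA : A.IsHermitian) (s : ℝ) :
    (A + s • A ^ 2).charpoly = ∏ i, (X - C (hA.eigenvalues i + s * hA.eigenvalues i ^ 2)) := by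
  have hcfc : cfc (fun x : ℝ => x + s * x ^ 2) A = A + s • A ^ 2 := by
    rw [cfc_add .., cfc_const_mul .., cfc_pow .., cfc_id' ..]
  rw [← hcfc, hA.charpoly_cfc_eq]
  rfl

theorem LinearMap.sum_sum_smul_apply_single_single {ι κ R M : Type*} [Fintype ι] [Fintype κ]
    [DecidableEq ι] [DecidableEq κ] [Semiring R] [AddCommMonoid M] [Module R M]
    (L : (ι → κ → R) →ₗ[R] M) (B : ι → κ → R) :
    ∑ i, ∑ j, B i j • L (Pi.single i (Pi.single j 1)) = L B := by
  have hB : B = ∑ i, ∑ j, B i j • Pi.single i (Pi.single j 1) := by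
    ext i j
    simp [Pi.single_apply, apply_ite (fun f : κ → R => f j)]
  conv_rhs => rw [hB]
  simp only [map_sum, map_smul]

section EMat

variable {n : ℕ}

theorem differentiable_EMat (k : ℕ) : Differentiable ℝ (EMat n k) :=
  ((Matrix.differentiable_charpoly_coeff (n - k)).const_mul _).const_mul _

theorem EMat_eq_inv_choose_mul_elemSymm {A : Fin n → Fin n → ℝ} {μ : Fin n → ℝ}
    (hμ : (Matrix.of A).charpoly = ∏ i, (X - C (μ i))) (k : ℕ) :
    EMat n k A = (n.choose k : ℝ)⁻¹ * elemSymm μ k := by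
  rcases le_or_gt k n with hkn | hnk
  · have hcoeff := coeff_prod_X_sub_C_card_sub μ (k := k) (by rwa [Fintype.card_fin])
    rw [Fintype.card_fin] at hcoeff
    rw [EMat, hμ, hcoeff, ← mul_assoc ((-1 : ℝ) ^ k), ← mul_pow]
    norm_num
  · simp [EMat, Nat.choose_eq_zero_of_lt hnk]

theorem elemSymm_eq_choose_mul_EMat {A : Fin n → Fin n → ℝ} {μ : Fin n → ℝ}
    (hμ : (Matrix.of A).charpoly = ∏ i, (X - C (μ i))) (k : ℕ) :
    elemSymm μ k = n.choose k * EMat n k A := by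
  rcases le_or_gt k n with hkn | hnk
  · have hchoose : (n.choose k : ℝ) ≠ 0 := Nat.cast_ne_zero.mpr (Nat.choose_pos hkn).ne'
    rw [EMat_eq_inv_choose_mul_elemSymm hμ, mul_inv_cancel_left₀ hchoose]
  · rw [elemSymm_eq_zero_of_card_lt μ (by rwa [Fintype.card_fin]), Nat.choose_eq_zero_of_lt hnk,
      Nat.cast_zero, zero_mul]

theorem fderiv_EMat_apply_sq {A : Fin n → Fin n → ℝ} (hA : (Matrix.of A).IsHermitian) (k : ℕ) :
    fderiv ℝ (EMat n k) A (fun i j => ∑ m, A i m * A m j)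
      = (n.choose k : ℝ)⁻¹ * (elemSymm hA.eigenvalues 1 * elemSymm hA.eigenvalues k
          - (k + 1) * elemSymm hA.eigenvalues (k + 1)) := by
  set μ := hA.eigenvalues
  set B : Fin n → Fin n → ℝ := fun i j => ∑ m, A i m * A m j
  have hcurve : HasDerivAt (fun s : ℝ => A + s • B) B 0 := by
    simpa using ((hasDerivAt_id (0 : ℝ)).smul_const B).const_add A
  have hchain : HasDerivAt (fun s : ℝ => EMat n k (A + s • B)) (fderiv ℝ (EMat n k) A B) 0 := by
    have hfderiv : HasFDerivAt (EMat n k) (fderiv ℝ (EMat n k) A) (A + (0 : ℝ) • B) := by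
      rw [zero_smul, add_zero]
      exact (differentiable_EMat k A).hasFDerivAt
    exact hfderiv.comp_hasDerivAt 0 hcurve
  have hspectral : (fun s : ℝ => EMat n k (A + s • B))
      = fun s => (n.choose k : ℝ)⁻¹ * elemSymm (fun i => μ i + s * μ i ^ 2) k := by
    funext s
    have hmat : Matrix.of (A + s • B) = Matrix.of A + s • Matrix.of A ^ 2 := by
      ext i j
      simp [B, sq, Matrix.mul_apply]
    exact EMat_eq_inv_choose_mul_elemSymm (hmat ▸ hA.charpoly_add_smul_sq s) k
  have hexplicit := (HasDerivAt.elemSymm (f := fun i s => μ i + s * μ i ^ 2) (x := 0)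
    (fun i => (hasDerivAt_mul_const (μ i ^ 2)).const_add (μ i)) k).const_mul (n.choose k : ℝ)⁻¹
  simp only [zero_mul, add_zero, sum_sum_prod_erase_mul_sq] at hexplicit
  exact hchain.unique (hspectral ▸ hexplicit)

end EMat

/-- `∑_{i,j} Ė_k^{ij} (A²)_{ij} = n E_1(A) E_k(A) − (n−k) E_{k+1}(A)`. -/
theorem statement2 (n k : ℕ) (hkn : k ≤ n)
    (A : Fin n → Fin n → ℝ) (hA : ∀ i j, A i j = A j i) :
    ∑ i : Fin n, ∑ j : Fin n, EMatDot n k A i j * (∑ m : Fin n, A i m * A m j)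
      = (n : ℝ) * EMat n 1 A * EMat n k A - ((n : ℝ) - (k : ℝ)) * EMat n (k + 1) A := by
  have hH : (Matrix.of A).IsHermitian := Matrix.IsHermitian.ext fun i j => by simp [hA j i]
  have hσ := elemSymm_eq_choose_mul_EMat (A := A) (μ := hH.eigenvalues)
    (by simpa using hH.charpoly_eq)
  have hchoose : (n.choose (k + 1) : ℝ) * (k + 1) = n.choose k * (n - k) := by
    rw [← Nat.cast_sub hkn]
    exact_mod_cast Nat.choose_succ_right_eq n k
  have hck : (n.choose k : ℝ) ≠ 0 := Nat.cast_ne_zero.mpr (Nat.choose_pos hkn).ne'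
  calc ∑ i, ∑ j, EMatDot n k A i j * (∑ m, A i m * A m j)
      = fderiv ℝ (EMat n k) A (fun i j => ∑ m, A i m * A m j) := by
        simp_rw [EMatDot, mul_comm (fderiv ℝ (EMat n k) A _), ← smul_eq_mul]
        exact (fderiv ℝ (EMat n k) A).toLinearMap.sum_sum_smul_apply_single_single _
    _ = _ := fderiv_EMat_apply_sq hH k
    _ = _ := by
        rw [hσ 1, hσ k, hσ (k + 1), Nat.choose_one_right]
        field_simp
        linear_combination -EMat n (k + 1) A * hchoose
end

section
/- Let F(κ) = E_k(κ)/E_{k-1}(κ) on the cone Γ_k^+. Then 1 ≤ ∑_p ∂F/∂κ_p ≤ k. -/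
/-!
Summing the partial derivatives means differentiating along `𝟙 = (1, …, 1)`, and
`∂_𝟙 E_m = m E_{m-1}`: every `(m-1)`-subset extends to an `m`-subset in `n - m + 1` ways. Hence
`∑_p ∂F/∂κ_p = k - (k - 1) E_k E_{k-2} / E_{k-1}²`, and both bounds amount to
`0 ≤ E_k E_{k-2} ≤ E_{k-1}²`, i.e. positivity on `Γ_k^+` and Newton's inequality.

Newton's inequality holds on all of `ℝⁿ`. For `p = ∏ (X - κ_i)`, Rolle's theorem makes the roots
of `p'` real, and by Vieta they have the same normalized means `E_j` as `κ` for `j < n`; this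
reduces the inequality to `n = m + 2`, where, with `P_i = ∏_{l ≠ i} κ_l`, it becomes
Cauchy–Schwarz `(∑ P_i)² ≤ n ∑ P_i²`.
-/

/-- The normalized `k`-th elementary symmetric function of `κ ∈ ℝⁿ`. -/
noncomputable def Esym (n k : ℕ) (κ : Fin n → ℝ) : ℝ :=
  ((n.choose k : ℝ))⁻¹ * ∑ s ∈ Finset.univ.powersetCard k, ∏ i ∈ s, κ i

/-- The positive cone `Γ_k^+`. -/
def GammaPlus (n k : ℕ) : Set (Fin n → ℝ) :=
  {x | ∀ i : ℕ, 1 ≤ i → i ≤ k → 0 < Esym n i x}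

/-- The curvature quotient `F = E_k / E_{k-1}`. -/
noncomputable def Fquot (n k : ℕ) (κ : Fin n → ℝ) : ℝ :=
  Esym n k κ / Esym n (k - 1) κ

open Finset Polynomial

namespace Finset

variable {ι M : Type*} [DecidableEq ι] [AddCommMonoid M]

theorem sum_powersetCard_succ_sum_erase (u : Finset ι) (m : ℕ) (f : Finset ι → ι → M) :
    ∑ s ∈ u.powersetCard (m + 1), ∑ i ∈ s, f (s.erase i) i
      = ∑ t ∈ u.powersetCard m, ∑ i ∈ u \ t, f t i := by
  rw [sum_sigma', sum_sigma']
  refine sum_nbij' (fun p => ⟨p.1.erase p.2, p.2⟩) (fun p => ⟨insert p.2 p.1, p.2⟩)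
    ?_ ?_ ?_ ?_ (fun _ _ => rfl)
  · rintro ⟨s, i⟩ hp
    simp only [mem_sigma, mem_powersetCard] at hp ⊢
    obtain ⟨⟨hsu, hsc⟩, hi⟩ := hp
    exact ⟨⟨(erase_subset _ _).trans hsu, by rw [card_erase_of_mem hi, hsc]; rfl⟩,
      mem_sdiff.2 ⟨hsu hi, notMem_erase _ _⟩⟩
  · rintro ⟨t, i⟩ hp
    simp only [mem_sigma, mem_powersetCard, mem_sdiff] at hp ⊢
    obtain ⟨⟨htu, htc⟩, hiu, hit⟩ := hp
    exact ⟨⟨insert_subset hiu htu, by rw [card_insert_of_notMem hit, htc]⟩, mem_insert_self _ _⟩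
  · rintro ⟨s, i⟩ hp
    simp only [mem_sigma] at hp
    simp [insert_erase hp.2]
  · rintro ⟨t, i⟩ hp
    simp only [mem_sigma, mem_sdiff] at hp
    simp [erase_insert hp.2.2]

theorem sum_powersetCard_succ_sum_erase_eq_nsmul (u : Finset ι) (m : ℕ) (g : Finset ι → M) :
    ∑ s ∈ u.powersetCard (m + 1), ∑ i ∈ s, g (s.erase i)
      = (#u - m) • ∑ t ∈ u.powersetCard m, g t := by
  rw [sum_powersetCard_succ_sum_erase u m (fun t _ => g t), smul_sum]
  refine sum_congr rfl fun t ht => ?_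
  rw [sum_const, card_sdiff_of_subset (mem_powersetCard.1 ht).1, (mem_powersetCard.1 ht).2]

theorem sum_powersetCard_eq_sum_erase {u : Finset ι} {m : ℕ} (hu : #u = m + 1)
    (g : Finset ι → M) :
    ∑ t ∈ u.powersetCard m, g t = ∑ i ∈ u, g (u.erase i) := by
  have h := sum_powersetCard_succ_sum_erase_eq_nsmul u m g
  rwa [← hu, powersetCard_self, sum_singleton, hu, Nat.add_sub_cancel_left, one_smul, eq_comm] at h

end Finset

namespace Polynomial

theorem Splits.derivative {p : ℝ[X]} (hp : p.Splits) : p.derivative.Splits := by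
  rw [splits_iff_card_roots] at hp ⊢
  have hRolle := card_roots_le_derivative p
  have hdeg := natDegree_derivative_le p
  have hroots := card_roots' p.derivative
  omega

theorem Splits.card_add_one_mul_esymm_roots_derivative {p : ℝ[X]} (hp : p.Splits) {N : ℕ}
    (hN : p.natDegree = N + 1) {i : ℕ} (hi : i ≤ N) :
    (N + 1 : ℝ) * p.derivative.roots.esymm i = (N + 1 - i : ℕ) * p.roots.esymm i := by
  have hq : p.derivative.Splits := hp.derivative
  have hqdeg : p.derivative.natDegree = N := by
    rw [natDegree_derivative, hN, Nat.add_sub_cancel]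
  have hlc : p.derivative.leadingCoeff = (N + 1) * p.leadingCoeff := by
    rw [leadingCoeff, hqdeg, coeff_derivative, ← hN, mul_comm]
    norm_cast
  have hp0 : p.leadingCoeff ≠ 0 :=
    leadingCoeff_ne_zero.2 (ne_zero_of_natDegree_gt (n := 0) (by omega))
  -- the coefficient of `X ^ (N - i)` in `p'`: Vieta for `p'` vs. the derivative of Vieta for `p`
  have hcoeff := coeff_derivative p (N - i)
  rw [coeff_eq_esymm_roots_of_splits hq (by omega), coeff_eq_esymm_roots_of_splits hp (by omega),
    hqdeg, hN, hlc, show N - (N - i) = i by omega, show N + 1 - (N - i + 1) = i by omega] at hcoeff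
  have hsign : p.leadingCoeff * (-1) ^ i ≠ 0 := mul_ne_zero hp0 (pow_ne_zero _ (by norm_num))
  apply mul_left_cancel₀ hsign
  rw [Nat.cast_sub (by omega : i ≤ N + 1)]
  push_cast [Nat.cast_sub hi] at hcoeff ⊢
  linear_combination hcoeff

end Polynomial

section NewtonTop

variable {ι : Type*} [Fintype ι] [DecidableEq ι] (x : ι → ℝ)

theorem prod_mul_prod_erase_erase {i j : ι} (hij : j ≠ i) :
    (∏ l, x l) * ∏ l ∈ (univ.erase i).erase j, x l
      = (∏ l ∈ univ.erase i, x l) * ∏ l ∈ univ.erase j, x l := by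
  rw [← mul_prod_erase univ x (mem_univ i), ← mul_prod_erase (univ.erase i) x
    (mem_erase.2 ⟨hij, mem_univ j⟩), ← mul_prod_erase (univ.erase j) x
    (mem_erase.2 ⟨hij.symm, mem_univ i⟩), erase_right_comm]
  ring

theorem two_mul_prod_mul_esymm_le {m : ℕ} (hι : Fintype.card ι = m + 2) :
    2 * (m + 2) * ((∏ i, x i) * ∑ t ∈ univ.powersetCard m, ∏ i ∈ t, x i)
      ≤ (m + 1) * (∑ t ∈ univ.powersetCard (m + 1), ∏ i ∈ t, x i) ^ 2 := by
  set P : ι → ℝ := fun i => ∏ l ∈ univ.erase i, x l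
  have hcard : #(univ : Finset ι) = m + 2 := hι
  have hσ₁ : ∑ t ∈ univ.powersetCard (m + 1), ∏ i ∈ t, x i = ∑ i, P i :=
    sum_powersetCard_eq_sum_erase hcard _
  have hσ₀ : 2 * ∑ t ∈ univ.powersetCard m, ∏ i ∈ t, x i
      = ∑ i, ∑ j ∈ univ.erase i, ∏ l ∈ (univ.erase i).erase j, x l := by
    rw [← sum_powersetCard_eq_sum_erase hcard (fun t => ∑ j ∈ t, ∏ l ∈ t.erase j, x l),
      sum_powersetCard_succ_sum_erase_eq_nsmul univ m (fun t => ∏ l ∈ t, x l), hcard,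
      nsmul_eq_mul]
    norm_num [show m + 2 - m = 2 by omega]
  have hpairs : (∏ i, x i) * (2 * ∑ t ∈ univ.powersetCard m, ∏ i ∈ t, x i)
      = (∑ i, P i) ^ 2 - ∑ i, P i ^ 2 := by
    rw [hσ₀, mul_sum, sq, sum_mul, ← sum_sub_distrib]
    refine sum_congr rfl fun i _ => ?_
    rw [mul_sum, sum_congr rfl fun j hj => prod_mul_prod_erase_erase x (ne_of_mem_erase hj),
      ← mul_sum, sum_erase_eq_sub (mem_univ i)]
    ring
  have hCS : (∑ i, P i) ^ 2 ≤ (m + 2) * ∑ i, P i ^ 2 := by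
    have h := sq_sum_le_card_mul_sum_sq (s := (univ : Finset ι)) (f := P)
    rwa [hcard, Nat.cast_add, Nat.cast_two] at h
  rw [hσ₁]
  nlinarith [hpairs, hCS]

end NewtonTop

namespace Multiset

noncomputable def esymmMean (s : Multiset ℝ) (j : ℕ) : ℝ :=
  ((card s).choose j : ℝ)⁻¹ * s.esymm j

theorem exists_card_eq_esymmMean_eq {s : Multiset ℝ} {N : ℕ} (hs : card s = N + 1) :
    ∃ t : Multiset ℝ, card t = N ∧ ∀ i ≤ N, t.esymmMean i = s.esymmMean i := by
  set p : ℝ[X] := (s.map (X - C ·)).prod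
  have hroots : p.roots = s := roots_multiset_prod_X_sub_C s
  have hdeg : p.natDegree = N + 1 := by rw [natDegree_multiset_prod_X_sub_C_eq_card, hs]
  have hp : p.Splits := splits_iff_card_roots.2 (by rw [hroots, hdeg, hs])
  refine ⟨p.derivative.roots, ?_, fun i hi => ?_⟩
  · rw [splits_iff_card_roots.1 hp.derivative, natDegree_derivative, hdeg, Nat.add_sub_cancel]
  have hrel := hp.card_add_one_mul_esymm_roots_derivative hdeg hi
  rw [hroots] at hrel
  have hchoose : (N.choose i : ℝ) * (N + 1) = (N + 1).choose i * (N + 1 - i : ℕ) := by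
    exact_mod_cast Nat.choose_mul_succ_eq N i
  have hN : (N.choose i : ℝ) ≠ 0 := Nat.cast_ne_zero.2 (Nat.choose_pos hi).ne'
  have hN1 : ((N + 1).choose i : ℝ) ≠ 0 := Nat.cast_ne_zero.2 (Nat.choose_pos (by omega)).ne'
  have hsub : ((N + 1 - i : ℕ) : ℝ) ≠ 0 := Nat.cast_ne_zero.2 (by omega)
  have key : p.derivative.roots.esymm i * (N + 1).choose i = s.esymm i * N.choose i :=
    mul_right_cancel₀ hsub (by linear_combination (N.choose i : ℝ) * hrel
      - p.derivative.roots.esymm i * hchoose)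
  rw [esymmMean, esymmMean, splits_iff_card_roots.1 hp.derivative, natDegree_derivative, hdeg,
    Nat.add_sub_cancel, hs]
  field_simp
  linear_combination key

theorem esymmMean_mul_le_sq_of_card_eq {s : Multiset ℝ} {m : ℕ} (hs : card s = m + 2) :
    s.esymmMean (m + 2) * s.esymmMean m ≤ s.esymmMean (m + 1) ^ 2 := by
  obtain ⟨l, rfl⟩ : ∃ l : List ℝ, (l : Multiset ℝ) = s := ⟨s.toList, s.coe_toList⟩
  have hl : Fintype.card (Fin l.length) = m + 2 := by simpa using hs
  have hesymm : ∀ j, (l : Multiset ℝ).esymm j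
      = ∑ t ∈ univ.powersetCard j, ∏ i ∈ t, l.get i := by
    intro j
    rw [← esymm_map_val, Fin.univ_val_map, List.ofFn_get]
  have htop : ∑ t ∈ univ.powersetCard (m + 2), ∏ i ∈ t, l.get i = ∏ i, l.get i := by
    rw [← hl, ← card_univ, Finset.powersetCard_self, Finset.sum_singleton]
  have hchoose : ((m + 2).choose m : ℝ) = (m + 2) * (m + 1) / 2 := by
    have h := Nat.choose_succ_right_eq (m + 2) m
    rw [Nat.choose_succ_self_right, show m + 2 - m = 2 by omega] at h
    rw [eq_div_iff two_ne_zero]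
    exact_mod_cast h.symm
  have h := two_mul_prod_mul_esymm_le l.get hl
  simp only [esymmMean, hs, hesymm, htop, Nat.choose_self, Nat.choose_succ_self_right, hchoose]
  set σ₂ := ∏ i, l.get i
  set σ₁ := ∑ t ∈ univ.powersetCard (m + 1), ∏ i ∈ t, l.get i
  set σ₀ := ∑ t ∈ univ.powersetCard m, ∏ i ∈ t, l.get i
  calc _ = 2 * (m + 2) * (σ₂ * σ₀) / ((m + 2) ^ 2 * (m + 1)) := by push_cast; field_simp
    _ ≤ (m + 1) * σ₁ ^ 2 / ((m + 2) ^ 2 * (m + 1)) := by gcongr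
    _ = _ := by push_cast; field_simp; ring

theorem esymmMean_mul_le_sq {s : Multiset ℝ} {m : ℕ} (hs : m + 2 ≤ card s) :
    s.esymmMean (m + 2) * s.esymmMean m ≤ s.esymmMean (m + 1) ^ 2 := by
  obtain ⟨N, hN⟩ : ∃ N, card s = N := ⟨_, rfl⟩
  induction N, (hN ▸ hs : m + 2 ≤ N) using Nat.le_induction generalizing s with
  | base => exact esymmMean_mul_le_sq_of_card_eq hN
  | succ N hmN ih =>
    obtain ⟨t, ht, hmean⟩ := exists_card_eq_esymmMean_eq hN
    rw [← hmean _ (by omega), ← hmean _ (by omega), ← hmean _ (by omega)]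
    exact ih (by omega) ht

end Multiset

theorem Esym_zero (n : ℕ) : Esym n 0 = fun _ => 1 := by
  funext κ
  simp [Esym]

theorem Esym_eq_esymmMean (n j : ℕ) (κ : Fin n → ℝ) :
    Esym n j κ = (univ.val.map κ).esymmMean j := by
  rw [Esym, Multiset.esymmMean, esymm_map_val, Multiset.card_map, card_val, card_univ,
    Fintype.card_fin]

theorem Esym_mul_le_sq {n m : ℕ} (h : m + 2 ≤ n) (κ : Fin n → ℝ) :
    Esym n (m + 2) κ * Esym n m κ ≤ Esym n (m + 1) κ ^ 2 := by
  simp only [Esym_eq_esymmMean]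
  exact Multiset.esymmMean_mul_le_sq (by simpa using h)

theorem Esym_pos_of_mem_GammaPlus {n k j : ℕ} {κ : Fin n → ℝ} (hκ : κ ∈ GammaPlus n k)
    (hj : j ≤ k) : 0 < Esym n j κ := by
  obtain _ | j := j
  · simp [Esym_zero]
  · exact hκ (j + 1) (by omega) hj

theorem hasFDerivAt_Esym (n m : ℕ) (κ : Fin n → ℝ) :
    HasFDerivAt (Esym n m) (((n.choose m : ℝ))⁻¹ • ∑ s ∈ univ.powersetCard m, ∑ i ∈ s,
      (∏ j ∈ s.erase i, κ j) • ContinuousLinearMap.proj (R := ℝ) (φ := fun _ : Fin n => ℝ) i) κ :=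
  (HasFDerivAt.fun_sum fun _ _ =>
    HasFDerivAt.finsetProd fun i _ => hasFDerivAt_apply i κ).const_mul _

theorem fderiv_Esym_apply_one {n m : ℕ} (hm : m ≤ n) (κ : Fin n → ℝ) :
    fderiv ℝ (Esym n m) κ 1 = m * Esym n (m - 1) κ := by
  obtain _ | j := m
  · simp [Esym_zero]
  rw [(hasFDerivAt_Esym n (j + 1) κ).fderiv]
  simp only [smul_apply, _root_.sum_apply, ContinuousLinearMap.proj_apply, Pi.one_apply,
    smul_eq_mul, mul_one]
  rw [sum_powersetCard_succ_sum_erase_eq_nsmul univ j (fun t => ∏ i ∈ t, κ i), card_univ,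
    Fintype.card_fin, nsmul_eq_mul, Esym, Nat.add_sub_cancel]
  have hchoose : (n.choose (j + 1) : ℝ) * (j + 1) = n.choose j * (n - j : ℕ) := by
    exact_mod_cast Nat.choose_succ_right_eq n j
  have hj1 : (n.choose (j + 1) : ℝ) ≠ 0 := Nat.cast_ne_zero.2 (Nat.choose_pos hm).ne'
  have hj : (n.choose j : ℝ) ≠ 0 := Nat.cast_ne_zero.2 (Nat.choose_pos (by omega)).ne'
  field_simp
  push_cast
  linear_combination -(∑ t ∈ univ.powersetCard j, ∏ i ∈ t, κ i) * hchoose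

theorem fderiv_div_apply {E : Type*} [NormedAddCommGroup E] [NormedSpace ℝ E] {f g : E → ℝ}
    {x : E} (hf : DifferentiableAt ℝ f x) (hg : DifferentiableAt ℝ g x) (hx : g x ≠ 0) (v : E) :
    fderiv ℝ (fun y => f y / g y) x v
      = (fderiv ℝ f x v * g x - f x * fderiv ℝ g x v) / g x ^ 2 := by
  simp only [div_eq_mul_inv]
  have h : HasFDerivAt (fun y => f y * (g y)⁻¹) _ x :=
    hf.hasFDerivAt.fun_mul ((hasFDerivAt_inv hx).comp x hg.hasFDerivAt)
  rw [h.fderiv]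
  simp only [add_apply, smul_apply, ContinuousLinearMap.comp_apply,
    ContinuousLinearMap.toSpanSingleton_apply, smul_eq_mul, mul_neg]
  field_simp
  ring

theorem fderiv_Fquot_apply_one {n k : ℕ} (hkn : k ≤ n) {κ : Fin n → ℝ}
    (hκ : Esym n (k - 1) κ ≠ 0) :
    fderiv ℝ (Fquot n k) κ 1
      = k - (k - 1 : ℕ) * (Esym n k κ * Esym n (k - 2) κ / Esym n (k - 1) κ ^ 2) := by
  have hdiff : ∀ m, DifferentiableAt ℝ (Esym n m) κ := fun m =>
    (hasFDerivAt_Esym n m κ).differentiableAt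
  have hF : Fquot n k = fun κ => Esym n k κ / Esym n (k - 1) κ := rfl
  rw [hF, fderiv_div_apply (hdiff k) (hdiff (k - 1)) hκ, fderiv_Esym_apply_one hkn,
    fderiv_Esym_apply_one (by omega), show k - 1 - 1 = k - 2 by omega]
  field_simp

theorem Esym_mul_div_sq_mem_Icc {n k : ℕ} (hk : 2 ≤ k) (hkn : k ≤ n) {κ : Fin n → ℝ}
    (hκ : κ ∈ GammaPlus n k) :
    Esym n k κ * Esym n (k - 2) κ / Esym n (k - 1) κ ^ 2 ∈ Set.Icc 0 1 := by
  obtain ⟨m, rfl⟩ : ∃ m, k = m + 2 := ⟨k - 2, by omega⟩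
  have hpos : ∀ j ≤ m + 2, 0 < Esym n j κ := fun j hj => Esym_pos_of_mem_GammaPlus hκ hj
  simp only [Nat.add_sub_cancel, show m + 2 - 1 = m + 1 by omega]
  refine ⟨by positivity [hpos (m + 2) le_rfl, hpos m (by omega)], ?_⟩
  exact div_le_one_of_le₀ (Esym_mul_le_sq hkn κ) (sq_nonneg _)

theorem statement4_general (n k : ℕ) (hk1 : 1 ≤ k) (hkn : k ≤ n)
    (κ : Fin n → ℝ) (hκ : κ ∈ GammaPlus n k) :
    1 ≤ ∑ p : Fin n, fderiv ℝ (Fquot n k) κ (Pi.single p 1) ∧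
      ∑ p : Fin n, fderiv ℝ (Fquot n k) κ (Pi.single p 1) ≤ (k : ℝ) := by
  have hsum :
      ∑ p : Fin n, fderiv ℝ (Fquot n k) κ (Pi.single p 1) = fderiv ℝ (Fquot n k) κ 1 := by
    rw [← map_sum, ← univ_sum_single (1 : Fin n → ℝ)]
    rfl
  rw [hsum, fderiv_Fquot_apply_one hkn (Esym_pos_of_mem_GammaPlus hκ (Nat.sub_le k 1)).ne']
  set r := Esym n k κ * Esym n (k - 2) κ / Esym n (k - 1) κ ^ 2
  obtain ⟨hr0, hr1⟩ : 0 ≤ ((k - 1 : ℕ) : ℝ) * r ∧ ((k - 1 : ℕ) : ℝ) * r ≤ (k - 1 : ℕ) := by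
    obtain rfl | hk := eq_or_lt_of_le hk1
    · simp
    obtain ⟨h0, h1⟩ := Esym_mul_div_sq_mem_Icc hk hkn hκ
    exact ⟨mul_nonneg (Nat.cast_nonneg _) h0, mul_le_of_le_one_right (Nat.cast_nonneg _) h1⟩
  have hcast : ((k - 1 : ℕ) : ℝ) = k - 1 := by rw [Nat.cast_sub hk1, Nat.cast_one]
  constructor <;> linarith

/-- on `Γ_k^+`, `1 ≤ ∑_p ∂F/∂κ_p ≤ k`. -/
theorem statement4 (n k : ℕ) (hn : 2 ≤ n) (hk1 : 1 ≤ k) (hkn : k ≤ n)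
    (κ : Fin n → ℝ) (hκ : κ ∈ GammaPlus n k) :
    1 ≤ ∑ p : Fin n, fderiv ℝ (Fquot n k) κ (Pi.single p 1) ∧
      ∑ p : Fin n, fderiv ℝ (Fquot n k) κ (Pi.single p 1) ≤ (k : ℝ) :=
  statement4_general n k hk1 hkn κ hκ
end

section
/- If κ ∈ Γ_k^+ with all κ_i ≥ h^{-1} > 0 (static convexity), then E_{k-1}(κ) − h·E_k(κ) ≤ 0. -/
open Finset

-- Each `t` with `|t| = m + 1` arises as `insert j s` from exactly the `m + 1` choices of `j ∈ t`.
theorem Finset.sum_powersetCard_sum_sdiff_insert {ι M : Type*} [DecidableEq ι] [AddCommMonoid M]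
    (u : Finset ι) (m : ℕ) (f : Finset ι → M) :
    ∑ s ∈ u.powersetCard m, ∑ j ∈ u \ s, f (insert j s) =
      (m + 1) • ∑ t ∈ u.powersetCard (m + 1), f t := by
  have hcard : (m + 1) • ∑ t ∈ u.powersetCard (m + 1), f t =
      ∑ t ∈ u.powersetCard (m + 1), ∑ _j ∈ t, f t := by
    rw [smul_sum]
    refine sum_congr rfl fun t ht => ?_
    rw [sum_const, (mem_powersetCard.mp ht).2]
  rw [hcard, sum_sigma', sum_sigma']
  refine sum_nbij' (fun p => ⟨insert p.2 p.1, p.2⟩) (fun p => ⟨p.1.erase p.2, p.2⟩)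
    ?_ ?_ ?_ ?_ fun _ _ => rfl
  · rintro ⟨s, j⟩ hp
    simp only [mem_sigma, mem_powersetCard, mem_sdiff] at hp ⊢
    exact ⟨⟨insert_subset hp.2.1 hp.1.1, by rw [card_insert_of_notMem hp.2.2, hp.1.2]⟩,
      mem_insert_self _ _⟩
  · rintro ⟨t, j⟩ hp
    simp only [mem_sigma, mem_powersetCard, mem_sdiff] at hp ⊢
    exact ⟨⟨(erase_subset _ _).trans hp.1.1, by rw [card_erase_of_mem hp.2, hp.1.2]; rfl⟩,
      hp.1.1 hp.2, notMem_erase _ _⟩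
  · rintro ⟨s, j⟩ hp
    simp only [mem_sigma, mem_sdiff] at hp
    simp [erase_insert hp.2.2]
  · rintro ⟨t, j⟩ hp
    simp only [mem_sigma] at hp
    simp [insert_erase hp.2]

theorem card_sub_smul_sum_prod_le {ι R : Type*} [Fintype ι] [DecidableEq ι] [CommSemiring R]
    [PartialOrder R] [IsOrderedRing R] (κ : ι → R) (h : R) (hκ : ∀ i, 0 ≤ κ i)
    (hhκ : ∀ i, 1 ≤ h * κ i) (m : ℕ) :
    (Fintype.card ι - m) • ∑ s ∈ univ.powersetCard m, ∏ i ∈ s, κ i ≤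
      h * (m + 1) • ∑ t ∈ univ.powersetCard (m + 1), ∏ i ∈ t, κ i := by
  rw [← sum_powersetCard_sum_sdiff_insert, mul_sum, smul_sum]
  refine sum_le_sum fun s hs => ?_
  have hcompl : (Fintype.card ι - m) • ∏ i ∈ s, κ i = ∑ _j ∈ univ \ s, ∏ i ∈ s, κ i := by
    rw [sum_const, card_univ_sdiff, (mem_powersetCard.mp hs).2]
  rw [hcompl, mul_sum]
  refine sum_le_sum fun j hj => ?_
  rw [prod_insert (mem_sdiff.mp hj).2, ← mul_assoc]
  exact le_mul_of_one_le_left (prod_nonneg fun i _ => hκ i) (hhκ j)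

theorem Esym_le_mul_Esym_succ {n m : ℕ} (hmn : m < n) {h : ℝ} {κ : Fin n → ℝ}
    (hκ : ∀ i, 0 ≤ κ i) (hhκ : ∀ i, 1 ≤ h * κ i) :
    Esym n m κ ≤ h * Esym n (m + 1) κ := by
  have key := card_sub_smul_sum_prod_le κ h hκ hhκ m
  rw [Fintype.card_fin, nsmul_eq_mul, nsmul_eq_mul, Nat.cast_add_one] at key
  have hchoose : (n.choose (m + 1) : ℝ) * (m + 1) = n.choose m * (n - m : ℕ) := by
    exact_mod_cast Nat.choose_succ_right_eq n m
  have hCm : (0 : ℝ) < n.choose m := by exact_mod_cast Nat.choose_pos hmn.le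
  have hCm1 : (0 : ℝ) < n.choose (m + 1) := by exact_mod_cast Nat.choose_pos hmn
  have hnm : (0 : ℝ) < (n - m : ℕ) := by exact_mod_cast Nat.sub_pos_of_lt hmn
  unfold Esym
  rw [inv_mul_le_iff₀ hCm]
  set S := ∑ s ∈ univ.powersetCard m, ∏ i ∈ s, κ i
  set S' := ∑ t ∈ univ.powersetCard (m + 1), ∏ i ∈ t, κ i
  calc S = ((n - m : ℕ) : ℝ)⁻¹ * ((n - m : ℕ) * S) := by field_simp
    _ ≤ ((n - m : ℕ) : ℝ)⁻¹ * (h * ((m + 1) * S')) := by gcongr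
    _ = n.choose m * (h * ((n.choose (m + 1) : ℝ)⁻¹ * S')) := by
      field_simp
      linear_combination h * S' * hchoose

theorem statement14_general (n k : ℕ) (hk1 : 1 ≤ k) (hkn : k ≤ n) (h : ℝ) (hh : 0 < h)
    (κ : Fin n → ℝ) (hstat : ∀ i, h⁻¹ ≤ κ i) :
    Esym n (k - 1) κ - h * Esym n k κ ≤ 0 := by
  obtain ⟨m, rfl⟩ := Nat.exists_eq_add_of_le' hk1
  have hκ : ∀ i, 0 ≤ κ i := fun i => (inv_pos.mpr hh).le.trans (hstat i)
  have hhκ : ∀ i, 1 ≤ h * κ i := fun i => (inv_le_iff_one_le_mul₀' hh).mp (hstat i)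
  simpa using Esym_le_mul_Esym_succ hkn hκ hhκ

/-- if `κ ∈ Γ_k^+` and all `κ_i ≥ h⁻¹ > 0` (static convexity),
then `E_{k-1}(κ) − h E_k(κ) ≤ 0`. -/
theorem statement14 (n k : ℕ) (hk1 : 1 ≤ k) (hkn : k ≤ n) (h : ℝ) (hh : 0 < h)
    (κ : Fin n → ℝ) (hκ : κ ∈ GammaPlus n k) (hstat : ∀ i, h⁻¹ ≤ κ i) :
    Esym n (k - 1) κ - h * Esym n k κ ≤ 0 :=
  statement14_general n k hk1 hkn h hh κ hstat
end

section
/- Monotonicity functional identity: along the flow ∂ₜr = −√(1+r^{-2}|∇r|²)·Φ with Φ = (n/(n−1))·(∂f/∂r)·√(1+r^{-2}|∇r|²) + fH, the quantity ∫_{M_t} f^{n/(n−1)} dμ_t satisfies d/dt ∫_{M_t} f^{n/(n−1)} dμ_t = −∫_{M_t} f^{1/(n−1)} Φ² dμ_t ≤ 0. -/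
/-!
Since `f^{n/(n-1)} = f^{1/(n-1)} · f`, the derivative of the integrand factors as
`-f^{1/(n-1)} Φ ((n/(n-1)) f' √(1+r⁻²|∇r|²) + f H) J`, and the bracket is `Φ` itself,
so the integrand is `-f^{1/(n-1)} Φ² J ≤ 0`.
-/

open MeasureTheory

lemma Real.rpow_div_sub_one_eq_mul {a n : ℝ} (ha : 0 < a) (hn : n ≠ 1) :
    a ^ (n / (n - 1)) = a ^ (1 / (n - 1)) * a := by
  have hexp : n / (n - 1) = 1 / (n - 1) + 1 := by
    field_simp [sub_ne_zero.mpr hn]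
    ring
  rw [hexp, Real.rpow_add ha, Real.rpow_one]

lemma flow_integrand_eq_neg_sq {n a a' s h J Φ : ℝ} (ha : 0 < a) (hn : n ≠ 1)
    (hΦ : Φ = n / (n - 1) * a' * s + a * h) :
    n / (n - 1) * a ^ (1 / (n - 1)) * a' * -(s * Φ) * J + a ^ (n / (n - 1)) * -(Φ * h * J)
      = -(a ^ (1 / (n - 1)) * Φ ^ 2 * J) := by
  rw [Real.rpow_div_sub_one_eq_mul ha hn]
  linear_combination (a ^ (1 / (n - 1)) * Φ * J) * hΦ

theorem statement15_general {X : Type*} [MeasurableSpace X] (μ : Measure X)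
    (n : ℕ) (hn : 2 ≤ n)
    (r rt J Jt H g2 Φ : ℝ → X → ℝ) (f f' : ℝ → ℝ)
    (hfpos : ∀ s : ℝ, 0 < f s)
    (hJ : ∀ t x, 0 ≤ J t x)
    (hΦ : ∀ t x, Φ t x
      = ((n : ℝ) / ((n : ℝ) - 1)) * f' (r t x) * Real.sqrt (1 + g2 t x)
        + f (r t x) * H t x)
    (hrt : ∀ t x, rt t x = -(Real.sqrt (1 + g2 t x) * Φ t x))
    (hJt : ∀ t x, Jt t x = -(Φ t x * H t x * J t x))
    (t : ℝ)
    (hD : HasDerivAt (fun s => ∫ x, f (r s x) ^ ((n : ℝ) / ((n : ℝ) - 1)) * J s x ∂μ)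
      (∫ x, (((n : ℝ) / ((n : ℝ) - 1)) * f (r t x) ^ ((1 : ℝ) / ((n : ℝ) - 1))
          * f' (r t x) * rt t x * J t x
        + f (r t x) ^ ((n : ℝ) / ((n : ℝ) - 1)) * Jt t x) ∂μ) t) :
    HasDerivAt (fun s => ∫ x, f (r s x) ^ ((n : ℝ) / ((n : ℝ) - 1)) * J s x ∂μ)
        (-∫ x, f (r t x) ^ ((1 : ℝ) / ((n : ℝ) - 1)) * Φ t x ^ 2 * J t x ∂μ) t ∧
      (-∫ x, f (r t x) ^ ((1 : ℝ) / ((n : ℝ) - 1)) * Φ t x ^ 2 * J t x ∂μ) ≤ 0 := by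
  have hn1 : (n : ℝ) ≠ 1 := by
    have : (2 : ℝ) ≤ n := by exact_mod_cast hn
    linarith
  have hintegrand : ∀ x,
      (n : ℝ) / (n - 1) * f (r t x) ^ ((1 : ℝ) / (n - 1)) * f' (r t x) * rt t x * J t x
        + f (r t x) ^ ((n : ℝ) / (n - 1)) * Jt t x
      = -(f (r t x) ^ ((1 : ℝ) / (n - 1)) * Φ t x ^ 2 * J t x) := fun x => by
    rw [hrt, hJt]
    exact flow_integrand_eq_neg_sq (hfpos _) hn1 (hΦ t x)
  simp only [hintegrand, integral_neg] at hD
  refine ⟨hD, neg_nonpos.mpr (integral_nonneg fun x => ?_)⟩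
  exact mul_nonneg (mul_nonneg (Real.rpow_nonneg (hfpos _).le _) (sq_nonneg _)) (hJ t x)

/-- monotonicity of `∫ f^{n/(n-1)} dμ_t` along the locally constrained
mean curvature flow `∂ₜ r = −√(1+r⁻²|∇r|²) Φ`, with
`Φ = (n/(n−1)) f'(r) √(1+r⁻²|∇r|²) + f(r) H`, area element `J` evolving by
`∂ₜ J = −Φ H J`: the derivative equals `−∫ f^{1/(n-1)} Φ² dμ_t ≤ 0`. -/
theorem statement15 {X : Type*} [MeasurableSpace X] (μ : Measure X)
    (n : ℕ) (hn : 2 ≤ n)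
    (r rt J Jt H g2 Φ : ℝ → X → ℝ) (f f' : ℝ → ℝ)
    (hfpos : ∀ s : ℝ, 0 < f s)
    (hf' : ∀ s : ℝ, HasDerivAt f (f' s) s)
    (hJ : ∀ t x, 0 ≤ J t x)
    (hg2 : ∀ t x, 0 ≤ g2 t x)
    (hΦ : ∀ t x, Φ t x
      = ((n : ℝ) / ((n : ℝ) - 1)) * f' (r t x) * Real.sqrt (1 + g2 t x)
        + f (r t x) * H t x)
    (hrt : ∀ t x, rt t x = -(Real.sqrt (1 + g2 t x) * Φ t x))
    (hJt : ∀ t x, Jt t x = -(Φ t x * H t x * J t x))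
    (t : ℝ)
    (hD : HasDerivAt (fun s => ∫ x, f (r s x) ^ ((n : ℝ) / ((n : ℝ) - 1)) * J s x ∂μ)
      (∫ x, (((n : ℝ) / ((n : ℝ) - 1)) * f (r t x) ^ ((1 : ℝ) / ((n : ℝ) - 1))
          * f' (r t x) * rt t x * J t x
        + f (r t x) ^ ((n : ℝ) / ((n : ℝ) - 1)) * Jt t x) ∂μ) t)
    (hInt : Integrable
      (fun x => f (r t x) ^ ((1 : ℝ) / ((n : ℝ) - 1)) * Φ t x ^ 2 * J t x) μ) :
    HasDerivAt (fun s => ∫ x, f (r s x) ^ ((n : ℝ) / ((n : ℝ) - 1)) * J s x ∂μ)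
        (-∫ x, f (r t x) ^ ((1 : ℝ) / ((n : ℝ) - 1)) * Φ t x ^ 2 * J t x ∂μ) t ∧
      (-∫ x, f (r t x) ^ ((1 : ℝ) / ((n : ℝ) - 1)) * Φ t x ^ 2 * J t x ∂μ) ≤ 0 :=
  statement15_general μ n hn r rt J Jt H g2 Φ f f' hfpos hJ hΦ hrt hJt t hD
end

section
/- Quermassintegral preservation: along the flow ∂ₜX = (1 − h·E_k/E_{k-1})ν of smooth closed strictly convex hypersurfaces in ℝ^{n+1}, the (k−1)-th quermassintegral V_{k-1}(Ω_t) is constant in time; this follows from the Minkowski identity ∫_{M_t} E_{k-1} dμ = ∫_{M_t} h·E_k dμ. -/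
open MeasureTheory

theorem integral_mul_one_sub_div_mul_eq_sub {X : Type*} [MeasurableSpace X] (μ : Measure X)
    {f g w : X → ℝ} (hf : ∀ x, f x ≠ 0)
    (hfw : Integrable (fun x => f x * w x) μ) (hgw : Integrable (fun x => g x * w x) μ) :
    ∫ x, f x * (1 - g x / f x) * w x ∂μ = ∫ x, f x * w x ∂μ - ∫ x, g x * w x ∂μ := by
  have hpointwise : ∀ x, f x * (1 - g x / f x) * w x = f x * w x - g x * w x := fun x => by
    field_simp [hf x]
  simp_rw [hpointwise]
  exact integral_sub hfw hgw

theorem statement18_general {X : Type*} [MeasurableSpace X] (μ : Measure X)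
    (n k : ℕ)
    (Ekm Ek h J : ℝ → X → ℝ) (V : ℝ → ℝ)
    (hpos : ∀ t x, 0 < Ekm t x)
    (hV : ∀ t : ℝ, HasDerivAt V
      (((n : ℝ) + 2 - (k : ℝ)) *
        ∫ x, Ekm t x * (1 - h t x * Ek t x / Ekm t x) * J t x ∂μ) t)
    (hInt1 : ∀ t : ℝ, Integrable (fun x => Ekm t x * J t x) μ)
    (hInt2 : ∀ t : ℝ, Integrable (fun x => h t x * Ek t x * J t x) μ)
    (hMink : ∀ t : ℝ, ∫ x, Ekm t x * J t x ∂μ = ∫ x, h t x * Ek t x * J t x ∂μ) :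
    ∀ s t : ℝ, V s = V t := by
  have hV_zero : ∀ t, HasDerivAt V 0 t := fun t => by
    have hV_t := hV t
    rwa [integral_mul_one_sub_div_mul_eq_sub μ (fun x => (hpos t x).ne') (hInt1 t) (hInt2 t),
      hMink t, sub_self, mul_zero] at hV_t
  exact is_const_of_deriv_eq_zero (fun t => (hV_zero t).differentiableAt)
    (fun t => (hV_zero t).deriv)

/-- quermassintegral preservation along the flow
`∂ₜX = (1 − h E_k/E_{k-1}) ν`. Given that the `(k−1)`-th quermassintegral `V` of the
enclosed domains satisfies the first-variation formula
`V'(t) = (n+2−k) ∫ E_{k-1} (1 − h E_k/E_{k-1}) dμ_t` (area element `J`), and the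
Minkowski identity `∫ E_{k-1} dμ_t = ∫ h E_k dμ_t`, the quantity `V` is constant. -/
theorem statement18 {X : Type*} [MeasurableSpace X] (μ : Measure X)
    (n k : ℕ) (hn : 2 ≤ n) (hk1 : 1 ≤ k) (hkn : k ≤ n)
    (Ekm Ek h J : ℝ → X → ℝ) (V : ℝ → ℝ)
    (hpos : ∀ t x, 0 < Ekm t x)
    (hJ : ∀ t x, 0 ≤ J t x)
    (hV : ∀ t : ℝ, HasDerivAt V
      (((n : ℝ) + 2 - (k : ℝ)) *
        ∫ x, Ekm t x * (1 - h t x * Ek t x / Ekm t x) * J t x ∂μ) t)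
    (hInt1 : ∀ t : ℝ, Integrable (fun x => Ekm t x * J t x) μ)
    (hInt2 : ∀ t : ℝ, Integrable (fun x => h t x * Ek t x * J t x) μ)
    (hMink : ∀ t : ℝ, ∫ x, Ekm t x * J t x ∂μ = ∫ x, h t x * Ek t x * J t x ∂μ) :
    ∀ s t : ℝ, V s = V t :=
  statement18_general μ n k Ekm Ek h J V hpos hV hInt1 hInt2 hMink
end
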